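/- Let A be a process executing the Read Checking protocol. Whatever the execution, A writes an infinite number of times into each of its Write registers Write_{AB_i}, for every neighbour B_i of A. -/
import Mathlib


/-!
An operational model of the Read Checking protocol of Johnen, Lavallée, Lavault.

A network is a finite-degree system of processes; each process `p` has `deg p ≥ 1`
neighbours, enumerated by `nbr p : Fin (deg p) → Proc`.  Communication is via link
registers under read/write atomicity: `Write_{AB}` and `Read_{AB}` are owned
(written) by `A` and can be read by its neighbour `B`.
-/

structure Network where
  Proc : Type
  deg : Proc → ℕ
  deg_pos : ∀ p, 0 < deg p
  nbr : (p : Proc) → Fin (deg p) → Proc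
  nbr_ne : ∀ p i, nbr p i ≠ p
  nbr_inj : ∀ p, Function.Injective (nbr p)
  nbr_symm : ∀ p i, ∃ j, nbr (nbr p i) j = p

namespace RC

open Classical

/-- Program counter of a process with `n` neighbours running the Read Checking
protocol.  `write i` : about to execute `write(Write_{AB_i}, get_i)`;
`loop i k` : inside the repeat loop, about to execute the `k`-th atomic action
(`k = 0`: `r_i ← read(Write_{B_iA})`, `k = 1`: `write(Read_{AB_i}, r_i)`,
`k = 2`: `val_i ← read(Read_{B_iA})`, `k = 3`: `s_i ← read(Write_{AB_i})`,
followed, after the last neighbour, by the (local) exit test `∀ i, val_i = s_i`). -/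
inductive PC (n : ℕ) : Type
  | write : Fin n → PC n
  | loop : Fin n → Fin 4 → PC n

/-- The link registers: `W A B` is `Write_{AB}`, `R A B` is `Read_{AB}` (both owned by `A`). -/
inductive Reg (Proc : Type) : Type
  | W : Proc → Proc → Reg Proc
  | R : Proc → Proc → Reg Proc

/-- An atomic action: a single read of one register, or a single write of a value
into one register (read/write atomicity). -/
inductive Act (Proc Val : Type) : Type
  | read : Reg Proc → Act Proc Val
  | write : Reg Proc → Val → Act Proc Val

/-- A configuration: contents of all link registers, and local state of every
process (program counter and the local variables `r_i`, `val_i`, `s_i`). -/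
structure Config (Net : Network) (Val : Type) : Type where
  regW : Net.Proc → Net.Proc → Val
  regR : Net.Proc → Net.Proc → Val
  pc : (p : Net.Proc) → PC (Net.deg p)
  rv : (p : Net.Proc) → Fin (Net.deg p) → Val
  vv : (p : Net.Proc) → Fin (Net.deg p) → Val
  sv : (p : Net.Proc) → Fin (Net.deg p) → Val

def finSucc? {n : ℕ} (i : Fin n) : Option (Fin n) :=
  if h : i.1 + 1 < n then some ⟨i.1 + 1, h⟩ else none

noncomputable def upd2 {Proc : Type} {β : Type} (f : Proc → Proc → β) (a b : Proc) (v : β) :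
    Proc → Proc → β :=
  fun x y => if x = a ∧ y = b then v else f x y

/-- One atomic step of process `p`, labelled by the action performed.
The value written by `write(Write_{AB_i}, get_i)` is arbitrary: `get_i` is an
arbitrary helper function returning the next message to be sent. -/
inductive Step (Net : Network) (Val : Type) :
    Config Net Val → Net.Proc → Act Net.Proc Val → Config Net Val → Prop
  | writeW (c : Config Net Val) (p : Net.Proc) (i : Fin (Net.deg p)) (v : Val)
      (h : c.pc p = .write i) :
      Step Net Val c p (.write (.W p (Net.nbr p i)) v)
        { c with
          regW := upd2 c.regW p (Net.nbr p i) v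
          pc := Function.update c.pc p
            (match finSucc? i with
             | some j => PC.write j
             | none => PC.loop ⟨0, Net.deg_pos p⟩ 0) }
  | readNbrW (c : Config Net Val) (p : Net.Proc) (i : Fin (Net.deg p))
      (h : c.pc p = .loop i 0) :
      Step Net Val c p (.read (.W (Net.nbr p i) p))
        { c with
          rv := Function.update c.rv p (Function.update (c.rv p) i (c.regW (Net.nbr p i) p))
          pc := Function.update c.pc p (PC.loop i 1) }
  | writeR (c : Config Net Val) (p : Net.Proc) (i : Fin (Net.deg p))
      (h : c.pc p = .loop i 1) :
      Step Net Val c p (.write (.R p (Net.nbr p i)) (c.rv p i))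
        { c with
          regR := upd2 c.regR p (Net.nbr p i) (c.rv p i)
          pc := Function.update c.pc p (PC.loop i 2) }
  | readNbrR (c : Config Net Val) (p : Net.Proc) (i : Fin (Net.deg p))
      (h : c.pc p = .loop i 2) :
      Step Net Val c p (.read (.R (Net.nbr p i) p))
        { c with
          vv := Function.update c.vv p (Function.update (c.vv p) i (c.regR (Net.nbr p i) p))
          pc := Function.update c.pc p (PC.loop i 3) }
  | readOwnW (c : Config Net Val) (p : Net.Proc) (i : Fin (Net.deg p))
      (h : c.pc p = .loop i 3) :
      Step Net Val c p (.read (.W p (Net.nbr p i)))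
        { c with
          sv := Function.update c.sv p (Function.update (c.sv p) i (c.regW p (Net.nbr p i)))
          pc := Function.update c.pc p
            (match finSucc? i with
             | some j => PC.loop j 0
             | none =>
               if ∀ j, c.vv p j = Function.update (c.sv p) i (c.regW p (Net.nbr p i)) j
               then PC.write ⟨0, Net.deg_pos p⟩
               else PC.loop ⟨0, Net.deg_pos p⟩ 0) }

/-- An execution: an infinite sequence of configurations, starting from an
arbitrary configuration, where at each instant `t` the scheduled process
`sched t` performs the atomic action `act t`. -/
structure Exec (Net : Network) (Val : Type) : Type where
  cfg : ℕ → Config Net Val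
  sched : ℕ → Net.Proc
  act : ℕ → Act Net.Proc Val
  step : ∀ t, Step Net Val (cfg t) (sched t) (act t) (cfg (t + 1))

/-- A process is enabled when it can perform an atomic step. -/
def Enabled {Net : Network} {Val : Type} (c : Config Net Val) (p : Net.Proc) : Prop :=
  ∃ a c', Step Net Val c p a c'

/-- Fair scheduler: any process that can continuously perform an action
eventually performs one. -/
def Exec.Fair {Net : Network} {Val : Type} (e : Exec Net Val) : Prop :=
  ∀ p t, (∀ u, t ≤ u → Enabled (e.cfg u) p) → ∃ u, t ≤ u ∧ e.sched u = p

/-- The program counter of `p` is inside the repeat loop. -/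
def InLoop {Net : Network} {Val : Type} (c : Config Net Val) (p : Net.Proc) : Prop :=
  ∃ i k, c.pc p = PC.loop i k

/-- `B` allows `A` to write iff `Read_{BA} = Write_{AB}`. -/
def Allows {Net : Network} {Val : Type} (c : Config Net Val) (B A : Net.Proc) : Prop :=
  c.regR B A = c.regW A B

/-- `B` is a neighbour of `A`. -/
def Neighbour (Net : Network) (A B : Net.Proc) : Prop := ∃ i, Net.nbr A i = B

/-- At instant `t`, process `A` writes (some value) into its register `Write_{AB}`. -/
def WritesW {Net : Network} {Val : Type} (e : Exec Net Val) (A B : Net.Proc) (t : ℕ) : Prop :=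
  e.sched t = A ∧ ∃ v, e.act t = Act.write (Reg.W A B) v

/-- At instant `t`, process `B` reads from the register `Write_{AB}` of its neighbour `A`. -/
def ReadsW {Net : Network} {Val : Type} (e : Exec Net Val) (A B : Net.Proc) (t : ℕ) : Prop :=
  e.sched t = B ∧ e.act t = Act.read (Reg.W A B)

section Aux

variable {Net : Network} {Val : Type}

/-- Local state of `p` is the same in `c` and `c'`. -/
def Same (c c' : Config Net Val) (p : Net.Proc) : Prop :=
  c.pc p = c'.pc p ∧ c.rv p = c'.rv p ∧ c.vv p = c'.vv p ∧ c.sv p = c'.sv p ∧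
  c.regW p = c'.regW p ∧ c.regR p = c'.regR p

theorem Same.refl (c : Config Net Val) (p : Net.Proc) : Same c c p :=
  ⟨rfl, rfl, rfl, rfl, rfl, rfl⟩

theorem Same.trans {c₁ c₂ c₃ : Config Net Val} {p} (h : Same c₁ c₂ p) (h' : Same c₂ c₃ p) :
    Same c₁ c₃ p :=
  ⟨h.1.trans h'.1, h.2.1.trans h'.2.1, h.2.2.1.trans h'.2.2.1, h.2.2.2.1.trans h'.2.2.2.1,
   h.2.2.2.2.1.trans h'.2.2.2.2.1, h.2.2.2.2.2.trans h'.2.2.2.2.2⟩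

theorem step_other {c c' : Config Net Val} {p q a} (hs : Step Net Val c p a c')
    (hq : q ≠ p) : Same c' c q := by
  cases hs <;>
    refine ⟨?_, ?_, ?_, ?_, ?_, ?_⟩ <;>
      first
        | rfl
        | (exact Function.update_of_ne hq _ _)
        | (funext x; simp [upd2, hq])

theorem always_enabled (c : Config Net Val) (p : Net.Proc) : Enabled c p := by
  rcases h : c.pc p with i | ⟨i, m⟩
  · exact ⟨_, _, Step.writeW c p i (c.rv p i) h⟩
  · match m with
    | ⟨0, _⟩ => exact ⟨_, _, Step.readNbrW c p i h⟩
    | ⟨1, _⟩ => exact ⟨_, _, Step.writeR c p i h⟩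
    | ⟨2, _⟩ => exact ⟨_, _, Step.readNbrR c p i h⟩
    | ⟨3, _⟩ => exact ⟨_, _, Step.readOwnW c p i h⟩

end Aux
section Inv

variable {Net : Network} {Val : Type}

theorem inv_write {c c' : Config Net Val} {p a} (hs : Step Net Val c p a c')
    {i} (hpc : c.pc p = .write i) :
    (∃ v, a = .write (.W p (Net.nbr p i)) v) ∧
    c'.regR = c.regR ∧ c'.rv = c.rv ∧ c'.vv = c.vv ∧ c'.sv = c.sv ∧
    c'.pc p = (match finSucc? i with
               | some j => PC.write j
               | none => PC.loop ⟨0, Net.deg_pos p⟩ 0) := by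
  cases hs with
  | writeW i' v h =>
      obtain rfl : i' = i := by have := hpc.symm.trans h; injection this with h'; exact h'.symm
      exact ⟨⟨v, rfl⟩, rfl, rfl, rfl, rfl, by simp⟩
  | readNbrW i' h => exact absurd (hpc.symm.trans h) (by simp)
  | writeR i' h => exact absurd (hpc.symm.trans h) (by simp)
  | readNbrR i' h => exact absurd (hpc.symm.trans h) (by simp)
  | readOwnW i' h => exact absurd (hpc.symm.trans h) (by simp)

theorem inv_loop0 {c c' : Config Net Val} {p a} (hs : Step Net Val c p a c')
    {i} (hpc : c.pc p = .loop i 0) :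
    a = .read (.W (Net.nbr p i) p) ∧
    c'.regW = c.regW ∧ c'.regR = c.regR ∧ c'.vv = c.vv ∧ c'.sv = c.sv ∧
    c'.rv p = Function.update (c.rv p) i (c.regW (Net.nbr p i) p) ∧
    c'.pc p = .loop i 1 := by
  cases hs with
  | readNbrW i' h =>
      have h2 := hpc.symm.trans h
      injection h2 with h3 h4
      subst h3
      exact ⟨rfl, rfl, rfl, rfl, rfl, by simp, by simp⟩
  | writeW i' v h => exact absurd (hpc.symm.trans h) (by simp)
  | writeR i' h =>
      have h2 := hpc.symm.trans h; injection h2 with h3 h4; exact absurd h4 (by decide)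
  | readNbrR i' h =>
      have h2 := hpc.symm.trans h; injection h2 with h3 h4; exact absurd h4 (by decide)
  | readOwnW i' h =>
      have h2 := hpc.symm.trans h; injection h2 with h3 h4; exact absurd h4 (by decide)

theorem inv_loop1 {c c' : Config Net Val} {p a} (hs : Step Net Val c p a c')
    {i} (hpc : c.pc p = .loop i 1) :
    a = .write (.R p (Net.nbr p i)) (c.rv p i) ∧
    c'.regW = c.regW ∧ c'.rv = c.rv ∧ c'.vv = c.vv ∧ c'.sv = c.sv ∧
    c'.regR = upd2 c.regR p (Net.nbr p i) (c.rv p i) ∧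
    c'.pc p = .loop i 2 := by
  cases hs with
  | writeR i' h =>
      have h2 := hpc.symm.trans h
      injection h2 with h3 h4
      subst h3
      exact ⟨rfl, rfl, rfl, rfl, rfl, rfl, by simp⟩
  | writeW i' v h => exact absurd (hpc.symm.trans h) (by simp)
  | readNbrW i' h =>
      have h2 := hpc.symm.trans h; injection h2 with h3 h4; exact absurd h4 (by decide)
  | readNbrR i' h =>
      have h2 := hpc.symm.trans h; injection h2 with h3 h4; exact absurd h4 (by decide)
  | readOwnW i' h =>
      have h2 := hpc.symm.trans h; injection h2 with h3 h4; exact absurd h4 (by decide)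

theorem inv_loop2 {c c' : Config Net Val} {p a} (hs : Step Net Val c p a c')
    {i} (hpc : c.pc p = .loop i 2) :
    a = .read (.R (Net.nbr p i) p) ∧
    c'.regW = c.regW ∧ c'.regR = c.regR ∧ c'.rv = c.rv ∧ c'.sv = c.sv ∧
    c'.vv p = Function.update (c.vv p) i (c.regR (Net.nbr p i) p) ∧
    c'.pc p = .loop i 3 := by
  cases hs with
  | readNbrR i' h =>
      have h2 := hpc.symm.trans h
      injection h2 with h3 h4
      subst h3
      exact ⟨rfl, rfl, rfl, rfl, rfl, by simp, by simp⟩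
  | writeW i' v h => exact absurd (hpc.symm.trans h) (by simp)
  | readNbrW i' h =>
      have h2 := hpc.symm.trans h; injection h2 with h3 h4; exact absurd h4 (by decide)
  | writeR i' h =>
      have h2 := hpc.symm.trans h; injection h2 with h3 h4; exact absurd h4 (by decide)
  | readOwnW i' h =>
      have h2 := hpc.symm.trans h; injection h2 with h3 h4; exact absurd h4 (by decide)

theorem inv_loop3 {c c' : Config Net Val} {p a} (hs : Step Net Val c p a c')
    {i} (hpc : c.pc p = .loop i 3) :
    a = .read (.W p (Net.nbr p i)) ∧
    c'.regW = c.regW ∧ c'.regR = c.regR ∧ c'.rv = c.rv ∧ c'.vv = c.vv ∧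
    c'.sv p = Function.update (c.sv p) i (c.regW p (Net.nbr p i)) ∧
    c'.pc p = (match finSucc? i with
               | some j => PC.loop j 0
               | none =>
                 if ∀ j, c.vv p j = Function.update (c.sv p) i (c.regW p (Net.nbr p i)) j
                 then PC.write ⟨0, Net.deg_pos p⟩
                 else PC.loop ⟨0, Net.deg_pos p⟩ 0) := by
  cases hs with
  | readOwnW i' h =>
      have h2 := hpc.symm.trans h
      injection h2 with h3 h4
      subst h3
      exact ⟨rfl, rfl, rfl, rfl, rfl, by simp, by simp⟩
  | writeW i' v h => exact absurd (hpc.symm.trans h) (by simp)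
  | readNbrW i' h =>
      have h2 := hpc.symm.trans h; injection h2 with h3 h4; exact absurd h4 (by decide)
  | writeR i' h =>
      have h2 := hpc.symm.trans h; injection h2 with h3 h4; exact absurd h4 (by decide)
  | readNbrR i' h =>
      have h2 := hpc.symm.trans h; injection h2 with h3 h4; exact absurd h4 (by decide)

end Inv
section Fairness

variable {Net : Network} {Val : Type} (e : Exec Net Val)

theorem sched_io (hfair : e.Fair) (p : Net.Proc) (t : ℕ) :
    ∃ u, t ≤ u ∧ e.sched u = p :=
  hfair p t (fun u _ => always_enabled _ p)

/-- We can wait until `p` is scheduled, with `p`'s local state unchanged. -/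
theorem until_sched (hfair : e.Fair) (p : Net.Proc) (t : ℕ) :
    ∃ u, t ≤ u ∧ e.sched u = p ∧ Same (e.cfg u) (e.cfg t) p := by
  obtain ⟨w, hw, hsw⟩ := sched_io e hfair p t
  have key : ∀ d t, e.sched (t + d) = p →
      ∃ u, t ≤ u ∧ e.sched u = p ∧ Same (e.cfg u) (e.cfg t) p := by
    intro d
    induction d with
    | zero => exact fun t h => ⟨t, le_refl t, h, Same.refl _ _⟩
    | succ d ih =>
        intro t h
        by_cases h0 : e.sched t = p
        · exact ⟨t, le_refl t, h0, Same.refl _ _⟩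
        · have h' : e.sched ((t+1) + d) = p := by
            rw [show (t+1) + d = t + (d+1) by omega]; exact h
          obtain ⟨u, hu, hsu, hsame⟩ := ih (t+1) h'
          exact ⟨u, by omega, hsu,
            hsame.trans (step_other (e.step t) (fun hc => h0 hc.symm))⟩
  have hw' : e.sched (t + (w - t)) = p := by rwa [show t + (w - t) = w by omega]
  exact key (w - t) t hw'

end Fairness
section Measure

variable {Net : Network} {Val : Type}

theorem finSucc?_some {n : ℕ} {i k : Fin n} (h : finSucc? i = some k) : k.1 = i.1 + 1 := by
  unfold finSucc? at h
  split at h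
  · cases h; rfl
  · cases h

theorem finSucc?_none {n : ℕ} {i : Fin n} (h : finSucc? i = none) : i.1 + 1 = n := by
  have := i.isLt
  unfold finSucc? at h
  split at h
  · cases h
  · omega

/-- Distance (in atomic steps, worst case) from a pc to the pc `loop j 0`. -/
def μ {n : ℕ} (j : Fin n) : PC n → ℕ
  | .write m => (n - m.1) + 4 * j.1
  | .loop k m =>
      if k.1 < j.1 ∨ (k.1 = j.1 ∧ m.1 = 0) then 4 * (j.1 - k.1) - m.1
      else (4 * (n - k.1) - m.1) + n + 4 * j.1

theorem mu_decrease {c c' : Config Net Val} {p a} (hs : Step Net Val c p a c')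
    (j : Fin (Net.deg p)) (hne : c.pc p ≠ .loop j 0) :
    μ j (c'.pc p) < μ j (c.pc p) := by
  have hjn := j.isLt
  cases hs with
  | writeW i v h =>
      have hin := i.isLt
      simp only [Function.update_self]
      rw [h]
      split
      · next k heq =>
          have hk := finSucc?_some heq
          simp only [μ]; omega
      · next heq =>
          have hk := finSucc?_none heq
          simp only [μ, Fin.val_zero, and_true, true_and, and_false, or_false, false_or]
          split <;> omega
  | readNbrW i h =>
      have hin := i.isLt
      simp only [Function.update_self]
      rw [h]
      have hne' : ¬ (i.1 = j.1 ∧ ((0 : Fin 4):ℕ) = 0) := by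
        rintro ⟨h1, -⟩
        exact hne (h.trans (by rw [Fin.ext_iff.mpr h1]))
      simp only [μ, Fin.val_zero, Fin.val_one, and_true, true_and, and_false, or_false, false_or] at hne' ⊢
      split <;> split <;> omega
  | writeR i h =>
      have hin := i.isLt
      simp only [Function.update_self]
      rw [h]
      simp only [μ, Fin.val_one, show ((2 : Fin 4) : ℕ) = 2 from rfl, and_true, true_and, and_false, or_false, false_or]
      split <;> split <;> omega
  | readNbrR i h =>
      have hin := i.isLt
      simp only [Function.update_self]
      rw [h]
      simp only [μ, show ((2 : Fin 4) : ℕ) = 2 from rfl, show ((3 : Fin 4) : ℕ) = 3 from rfl, and_true, true_and, and_false, or_false, false_or]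
      split <;> split <;> omega
  | readOwnW i h =>
      have hin := i.isLt
      simp only [Function.update_self]
      rw [h]
      split
      · next k heq =>
          have hk := finSucc?_some heq
          have hkn := k.isLt
          simp only [μ, Fin.val_zero, show ((3 : Fin 4) : ℕ) = 3 from rfl, and_true, true_and, and_false, or_false, false_or]
          split <;> split <;> omega
      · next heq =>
          have hk := finSucc?_none heq
          split
          · simp only [μ, show ((3 : Fin 4) : ℕ) = 3 from rfl, and_true, true_and, and_false, or_false, false_or]
            split <;> omega
          · simp only [μ, Fin.val_zero, show ((3 : Fin 4) : ℕ) = 3 from rfl, and_true, true_and, and_false, or_false, false_or]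
            split <;> split <;> omega

/-- Every process reaches the pc `loop j 0` (and is then scheduled). -/
theorem reach_pc (e : Exec Net Val) (hfair : e.Fair) (p : Net.Proc)
    (j : Fin (Net.deg p)) (t : ℕ) :
    ∃ u, t ≤ u ∧ e.sched u = p ∧ (e.cfg u).pc p = .loop j 0 := by
  have key : ∀ N t, μ j ((e.cfg t).pc p) ≤ N →
      ∃ u, t ≤ u ∧ e.sched u = p ∧ (e.cfg u).pc p = .loop j 0 := by
    intro N
    induction N with
    | zero =>
        intro t hμ
        have hpc : (e.cfg t).pc p = .loop j 0 := by
          rcases hh : (e.cfg t).pc p with m | ⟨k, m⟩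
          · rw [hh] at hμ; simp only [μ] at hμ; have := m.isLt; omega
          · rw [hh] at hμ; simp only [μ] at hμ
            have hkn := k.isLt
            have hm := m.isLt
            split at hμ
            · next hc =>
                have hkj : k.1 = j.1 ∧ m.1 = 0 := by omega
                congr 1
                · exact Fin.ext hkj.1
                · exact Fin.ext hkj.2
            · omega
        obtain ⟨u, hu, hsu, hsame⟩ := until_sched e hfair p t
        exact ⟨u, hu, hsu, hsame.1.trans hpc⟩
    | succ N ih =>
        intro t hμ
        by_cases hpc : (e.cfg t).pc p = .loop j 0
        · obtain ⟨u, hu, hsu, hsame⟩ := until_sched e hfair p t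
          exact ⟨u, hu, hsu, hsame.1.trans hpc⟩
        · obtain ⟨u, hu, hsu, hsame⟩ := until_sched e hfair p t
          by_cases hpc' : (e.cfg u).pc p = .loop j 0
          · exact ⟨u, hu, hsu, hpc'⟩
          · have hstep := e.step u
            rw [hsu] at hstep
            have hdec := mu_decrease hstep j hpc'
            have : μ j ((e.cfg (u+1)).pc p) ≤ N := by
              rw [hsame.1] at hdec; omega
            obtain ⟨u', hu', hsu', hpc''⟩ := ih (u+1) this
            exact ⟨u', by omega, hsu', hpc''⟩
  exact key (μ j ((e.cfg t).pc p)) t le_rfl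

end Measure
section Stuck

variable {Net : Network} {Val : Type} (e : Exec Net Val)

theorem never_low_write (hfair : e.Fair) {A : Net.Proc} {i : Fin (Net.deg A)} {t : ℕ}
    (H : ∀ u, t ≤ u → ¬ WritesW e A (Net.nbr A i) u) :
    ∀ d (j : Fin (Net.deg A)) u, t ≤ u → j.1 ≤ i.1 → i.1 - j.1 ≤ d →
      (e.cfg u).pc A ≠ .write j := by
  intro d
  induction d with
  | zero =>
      intro j u hu hji hd hpc
      obtain ⟨u₁, hu₁, hs₁, hsame⟩ := until_sched e hfair A u
      have hpc₁ : (e.cfg u₁).pc A = .write j := hsame.1.trans hpc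
      have hstep := e.step u₁
      rw [hs₁] at hstep
      obtain ⟨⟨v, ha⟩, -⟩ := inv_write hstep hpc₁
      have hji' : j = i := Fin.ext (by omega)
      subst hji'
      exact H u₁ (le_trans hu hu₁) ⟨hs₁, v, ha⟩
  | succ d ih =>
      intro j u hu hji hd hpc
      obtain ⟨u₁, hu₁, hs₁, hsame⟩ := until_sched e hfair A u
      have hpc₁ : (e.cfg u₁).pc A = .write j := hsame.1.trans hpc
      have hstep := e.step u₁
      rw [hs₁] at hstep
      obtain ⟨⟨v, ha⟩, -, -, -, -, hpc'⟩ := inv_write hstep hpc₁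
      by_cases hji' : j = i
      · subst hji'; exact H u₁ (le_trans hu hu₁) ⟨hs₁, v, ha⟩
      · have hlt : j.1 < i.1 :=
          lt_of_le_of_ne hji (fun h => hji' (Fin.ext h))
        have hin := i.isLt
        have hsucc : finSucc? j = some ⟨j.1+1, by omega⟩ := by
          unfold finSucc?; rw [dif_pos (by omega)]
        simp only [hsucc] at hpc'
        exact ih ⟨j.1+1, by omega⟩ (u₁+1) (by omega) (by simp; omega) (by simp; omega) hpc'

theorem never_write_le (hfair : e.Fair) {A : Net.Proc} {i : Fin (Net.deg A)} {t : ℕ}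
    (H : ∀ u, t ≤ u → ¬ WritesW e A (Net.nbr A i) u)
    (j : Fin (Net.deg A)) (u : ℕ) (hu : t ≤ u) (hji : j.1 ≤ i.1) :
    (e.cfg u).pc A ≠ .write j :=
  never_low_write e hfair H (i.1 - j.1) j u hu hji le_rfl

theorem in_loop_forever (hfair : e.Fair) {A : Net.Proc} {i : Fin (Net.deg A)} {t : ℕ}
    (H : ∀ u, t ≤ u → ¬ WritesW e A (Net.nbr A i) u) :
    ∃ T, t ≤ T ∧ ∀ u, T ≤ u → InLoop (e.cfg u) A := by
  obtain ⟨T, hT, hsT, hpcT⟩ := reach_pc e hfair A ⟨0, Net.deg_pos A⟩ t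
  refine ⟨T, hT, ?_⟩
  have hstep1 : ∀ u, T ≤ u → InLoop (e.cfg u) A → InLoop (e.cfg (u+1)) A := by
    intro u hu hin
    by_cases hA : e.sched u = A
    · obtain ⟨k, m, hpc⟩ := hin
      have hstep := e.step u
      rw [hA] at hstep
      match m, hpc with
      | ⟨0, _⟩, hpc =>
          exact ⟨k, 1, (inv_loop0 hstep hpc).2.2.2.2.2.2⟩
      | ⟨1, _⟩, hpc =>
          exact ⟨k, 2, (inv_loop1 hstep hpc).2.2.2.2.2.2⟩
      | ⟨2, _⟩, hpc =>
          exact ⟨k, 3, (inv_loop2 hstep hpc).2.2.2.2.2.2⟩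
      | ⟨3, _⟩, hpc =>
          have hpc' := (inv_loop3 hstep hpc).2.2.2.2.2.2
          rcases hsk : finSucc? k with - | k'
          · rw [hsk] at hpc'
            simp only at hpc'
            split at hpc'
            · exact absurd hpc'
                (never_write_le e hfair H ⟨0, Net.deg_pos A⟩ (u+1) (by omega) (by simp))
            · exact ⟨_, _, hpc'⟩
          · rw [hsk] at hpc'
            exact ⟨k', 0, hpc'⟩
    · obtain ⟨k, m, hpc⟩ := hin
      exact ⟨k, m, ((step_other (e.step u) (fun hc => hA hc.symm)).1).trans hpc⟩
  intro u hu
  induction u, hu using Nat.le_induction with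
  | base => exact ⟨_, _, hpcT⟩
  | succ u hu ih => exact hstep1 u hu ih

end Stuck
section Regs

variable {Net : Network} {Val : Type} (e : Exec Net Val)

theorem regW_const {A : Net.Proc} {T : ℕ}
    (hloop : ∀ u, T ≤ u → InLoop (e.cfg u) A) :
    ∀ u, T ≤ u → (e.cfg u).regW A = (e.cfg T).regW A := by
  intro u hu
  induction u, hu using Nat.le_induction with
  | base => rfl
  | succ u hu ih =>
      rw [← ih]
      by_cases hA : e.sched u = A
      · obtain ⟨k, m, hpc⟩ := hloop u hu
        have hstep := e.step u
        rw [hA] at hstep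
        match m, hpc with
        | ⟨0, _⟩, hpc => rw [(inv_loop0 hstep hpc).2.1]
        | ⟨1, _⟩, hpc => rw [(inv_loop1 hstep hpc).2.1]
        | ⟨2, _⟩, hpc => rw [(inv_loop2 hstep hpc).2.1]
        | ⟨3, _⟩, hpc => rw [(inv_loop3 hstep hpc).2.1]
      · exact (step_other (e.step u) (fun hc => hA hc.symm)).2.2.2.2.1

/-- Eventually `Read_{B_kA}` holds the (stabilised) value of `Write_{AB_k}` forever. -/
theorem allows_forever (hfair : e.Fair) {A : Net.Proc} {T : ℕ}
    (hW : ∀ u, T ≤ u → (e.cfg u).regW A = (e.cfg T).regW A)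
    (k : Fin (Net.deg A)) :
    ∃ Tk, T ≤ Tk ∧ ∀ u, Tk ≤ u →
      (e.cfg u).regR (Net.nbr A k) A = (e.cfg T).regW A (Net.nbr A k) := by
  set B := Net.nbr A k with hB
  set w := (e.cfg T).regW A B with hw
  obtain ⟨jk, hjk⟩ := Net.nbr_symm A k
  -- first, B reads `Write_{AB}` into `r_{jk}`
  obtain ⟨u₁, hu₁, hs₁, hpc₁⟩ := reach_pc e hfair B jk T
  have hstep₁ := e.step u₁
  rw [hs₁] at hstep₁
  obtain ⟨-, -, -, -, -, hrv₁, hpc₁'⟩ := inv_loop0 hstep₁ hpc₁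
  have hrv₁' : (e.cfg (u₁+1)).rv B jk = w := by
    rw [hrv₁, Function.update_self, hjk]
    rw [congrFun (hW u₁ hu₁) B]
  -- then, B writes `r_{jk}` into `Read_{BA}`
  obtain ⟨u₂, hu₂, hs₂, hsame₂⟩ := until_sched e hfair B (u₁+1)
  have hpc₂ : (e.cfg u₂).pc B = .loop jk 1 := hsame₂.1.trans hpc₁'
  have hrv₂ : (e.cfg u₂).rv B jk = w := (congrFun hsame₂.2.1 jk).trans hrv₁'
  have hstep₂ := e.step u₂
  rw [hs₂] at hstep₂
  obtain ⟨-, -, -, -, -, hregR₂, hpc₂'⟩ := inv_loop1 hstep₂ hpc₂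
  have hR₂ : (e.cfg (u₂+1)).regR B A = w := by
    rw [congrFun (congrFun hregR₂ B) A]
    unfold upd2
    rw [if_pos ⟨rfl, hjk.symm⟩]
    exact hrv₂
  -- finally, the invariant: `Read_{BA} = w` forever after
  refine ⟨u₂+1, by omega, ?_⟩
  have key : ∀ u, u₂+1 ≤ u →
      (e.cfg u).regR B A = w ∧ ((e.cfg u).pc B = .loop jk 1 → (e.cfg u).rv B jk = w) := by
    intro u hu
    induction u, hu using Nat.le_induction with
    | base =>
        refine ⟨hR₂, fun hh => ?_⟩
        rw [hpc₂'] at hh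
        injection hh with h3 h4
        exact absurd h4 (by decide)
    | succ u hu ih =>
        obtain ⟨ihR, ihrv⟩ := ih
        by_cases hBs : e.sched u = B
        · have hstep := e.step u
          rw [hBs] at hstep
          have huT : T ≤ u := by omega
          rcases hpc : (e.cfg u).pc B with m | ⟨k', m'⟩
          · obtain ⟨-, hregR, hrv, -, -, hpc'⟩ := inv_write hstep hpc
            refine ⟨(congrFun (congrFun hregR B) A).trans ihR, fun hh => ?_⟩
            rw [hpc'] at hh
            rcases hsk : finSucc? m with - | m''
            · rw [hsk] at hh; simp only at hh
              injection hh with h3 h4; exact absurd h4 (by decide)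
            · rw [hsk] at hh; simp only at hh; cases hh
          · match m', hpc with
            | ⟨0, _⟩, hpc =>
                obtain ⟨-, -, hregR, -, -, hrv, hpc'⟩ := inv_loop0 hstep hpc
                refine ⟨(congrFun (congrFun hregR B) A).trans ihR, fun hh => ?_⟩
                rw [hpc'] at hh
                injection hh with h3 h4
                subst h3
                rw [hrv, Function.update_self, hjk, congrFun (hW u huT) B]
            | ⟨1, _⟩, hpc =>
                obtain ⟨-, -, -, -, -, hregR, hpc'⟩ := inv_loop1 hstep hpc
                constructor
                · rw [congrFun (congrFun hregR B) A]
                  unfold upd2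
                  split
                  · next hcond =>
                      have hk' : k' = jk := Net.nbr_inj B (hcond.2.symm.trans hjk.symm)
                      subst hk'
                      exact ihrv hpc
                  · exact ihR
                · intro hh
                  rw [hpc'] at hh
                  injection hh with h3 h4; exact absurd h4 (by decide)
            | ⟨2, _⟩, hpc =>
                obtain ⟨-, -, hregR, hrv, -, -, hpc'⟩ := inv_loop2 hstep hpc
                refine ⟨(congrFun (congrFun hregR B) A).trans ihR, fun hh => ?_⟩
                rw [hpc'] at hh
                injection hh with h3 h4; exact absurd h4 (by decide)
            | ⟨3, _⟩, hpc =>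
                obtain ⟨-, -, hregR, hrv, -, -, hpc'⟩ := inv_loop3 hstep hpc
                refine ⟨(congrFun (congrFun hregR B) A).trans ihR, fun hh => ?_⟩
                rw [hpc'] at hh
                rcases hsk : finSucc? k' with - | k''
                · rw [hsk] at hh; simp only at hh
                  split at hh
                  · cases hh
                  · injection hh with h3 h4; exact absurd h4 (by decide)
                · rw [hsk] at hh; simp only at hh
                  injection hh with h3 h4; exact absurd h4 (by decide)
        · have hsame := step_other (e.step u) (fun hc => hBs hc.symm)
          refine ⟨(congrFun hsame.2.2.2.2.2 A).trans ihR, fun hh => ?_⟩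
          exact (congrFun hsame.2.1 jk).trans (ihrv (hsame.1.symm.trans hh))
  exact fun u hu => (key u hu).1

end Regs
section Final

variable {Net : Network} {Val : Type} (e : Exec Net Val)

theorem final_pass (hfair : e.Fair) {A : Net.Proc} {i : Fin (Net.deg A)} {t : ℕ}
    (H : ∀ u, t ≤ u → ¬ WritesW e A (Net.nbr A i) u)
    {T : ℕ} (htT : t ≤ T) {W : Net.Proc → Val}
    (hWc : ∀ u, T ≤ u → ∀ q, (e.cfg u).regW A q = W q)
    (hRc : ∀ u, T ≤ u → ∀ k : Fin (Net.deg A),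
       (e.cfg u).regR (Net.nbr A k) A = W (Net.nbr A k)) :
    False := by
  -- P k : A is at `loop k 0` at some time `u ≥ T`, with `val`, `s` correct below `k`.
  set P : Fin (Net.deg A) → Prop := fun k => ∃ u, T ≤ u ∧ (e.cfg u).pc A = .loop k 0 ∧
    ∀ k' : Fin (Net.deg A), k'.1 < k.1 →
      (e.cfg u).vv A k' = W (Net.nbr A k') ∧ (e.cfg u).sv A k' = W (Net.nbr A k') with hP
  have pass_step : ∀ k, P k → ∃ k', finSucc? k = some k' ∧ P k' := by
    rintro k ⟨u, hu, hpc, hinv⟩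
    -- step 0 : read Write_{B_k A}
    obtain ⟨u₁, hu₁, hs₁, hsame₁⟩ := until_sched e hfair A u
    have hpc₁ : (e.cfg u₁).pc A = .loop k 0 := hsame₁.1.trans hpc
    have hstep₁ := e.step u₁; rw [hs₁] at hstep₁
    obtain ⟨-, -, -, hvv₁, hsv₁, -, hpc₁'⟩ := inv_loop0 hstep₁ hpc₁
    have hinv₁ : ∀ k' : Fin (Net.deg A), k'.1 < k.1 →
        (e.cfg (u₁+1)).vv A k' = W (Net.nbr A k') ∧
        (e.cfg (u₁+1)).sv A k' = W (Net.nbr A k') := by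
      intro k' hk'
      obtain ⟨h1, h2⟩ := hinv k' hk'
      constructor
      · rw [congrFun (congrFun hvv₁ A) k', congrFun hsame₁.2.2.1 k']; exact h1
      · rw [congrFun (congrFun hsv₁ A) k', congrFun hsame₁.2.2.2.1 k']; exact h2
    -- step 1 : write Read_{A B_k}
    obtain ⟨u₂, hu₂, hs₂, hsame₂⟩ := until_sched e hfair A (u₁+1)
    have hpc₂ : (e.cfg u₂).pc A = .loop k 1 := hsame₂.1.trans hpc₁'
    have hstep₂ := e.step u₂; rw [hs₂] at hstep₂
    obtain ⟨-, -, hrv₂, hvv₂, hsv₂, -, hpc₂'⟩ := inv_loop1 hstep₂ hpc₂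
    have hinv₂ : ∀ k' : Fin (Net.deg A), k'.1 < k.1 →
        (e.cfg (u₂+1)).vv A k' = W (Net.nbr A k') ∧
        (e.cfg (u₂+1)).sv A k' = W (Net.nbr A k') := by
      intro k' hk'
      obtain ⟨h1, h2⟩ := hinv₁ k' hk'
      constructor
      · rw [congrFun (congrFun hvv₂ A) k', congrFun hsame₂.2.2.1 k']; exact h1
      · rw [congrFun (congrFun hsv₂ A) k', congrFun hsame₂.2.2.2.1 k']; exact h2
    -- step 2 : read Read_{B_k A} into val_k
    obtain ⟨u₃, hu₃, hs₃, hsame₃⟩ := until_sched e hfair A (u₂+1)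
    have hpc₃ : (e.cfg u₃).pc A = .loop k 2 := hsame₃.1.trans hpc₂'
    have hstep₃ := e.step u₃; rw [hs₃] at hstep₃
    obtain ⟨-, -, -, -, hsv₃, hvv₃, hpc₃'⟩ := inv_loop2 hstep₃ hpc₃
    have huT₃ : T ≤ u₃ := by omega
    have hinv₃ : ∀ k' : Fin (Net.deg A), k'.1 ≤ k.1 →
        (e.cfg (u₃+1)).vv A k' = W (Net.nbr A k') := by
      intro k' hk'
      rw [congrFun hvv₃ k']
      by_cases hkk : k' = k
      · subst hkk
        rw [Function.update_self]
        exact hRc u₃ huT₃ k'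
      · rw [Function.update_of_ne hkk, congrFun hsame₃.2.2.1 k']
        exact (hinv₂ k' (lt_of_le_of_ne hk' (fun h => hkk (Fin.ext h)))).1
    have hinv₃' : ∀ k' : Fin (Net.deg A), k'.1 < k.1 →
        (e.cfg (u₃+1)).sv A k' = W (Net.nbr A k') := by
      intro k' hk'
      rw [congrFun (congrFun hsv₃ A) k', congrFun hsame₃.2.2.2.1 k']
      exact (hinv₂ k' hk').2
    -- step 3 : read Write_{A B_k} into s_k, and possibly the exit test
    obtain ⟨u₄, hu₄, hs₄, hsame₄⟩ := until_sched e hfair A (u₃+1)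
    have hpc₄ : (e.cfg u₄).pc A = .loop k 3 := hsame₄.1.trans hpc₃'
    have hstep₄ := e.step u₄; rw [hs₄] at hstep₄
    obtain ⟨-, -, -, -, hvv₄, hsv₄, hpc₄'⟩ := inv_loop3 hstep₄ hpc₄
    have huT₄ : T ≤ u₄ := by omega
    have hvv₄' : ∀ k' : Fin (Net.deg A), k'.1 ≤ k.1 →
        (e.cfg u₄).vv A k' = W (Net.nbr A k') := by
      intro k' hk'
      rw [congrFun hsame₄.2.2.1 k']
      exact hinv₃ k' hk'
    have hsv₄' : ∀ k' : Fin (Net.deg A), k'.1 < k.1 →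
        (e.cfg u₄).sv A k' = W (Net.nbr A k') := by
      intro k' hk'
      rw [congrFun hsame₄.2.2.2.1 k']
      exact hinv₃' k' hk'
    have hsv₅ : ∀ k' : Fin (Net.deg A), k'.1 ≤ k.1 →
        (e.cfg (u₄+1)).sv A k' = W (Net.nbr A k') := by
      intro k' hk'
      rw [congrFun hsv₄ k']
      by_cases hkk : k' = k
      · subst hkk; rw [Function.update_self]; exact hWc u₄ huT₄ _
      · rw [Function.update_of_ne hkk]
        exact hsv₄' k' (lt_of_le_of_ne hk' (fun h => hkk (Fin.ext h)))
    rcases hsk : finSucc? k with - | k''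
    · -- `k` was the last neighbour: the exit test succeeds, contradiction.
      exfalso
      have hklast := finSucc?_none hsk
      have htest : ∀ j', (e.cfg u₄).vv A j' =
          Function.update ((e.cfg u₄).sv A) k ((e.cfg u₄).regW A (Net.nbr A k)) j' := by
        intro j'
        have hj' := j'.isLt
        by_cases hkk : j' = k
        · subst hkk
          rw [Function.update_self, hWc u₄ huT₄]
          exact hvv₄' j' le_rfl
        · rw [Function.update_of_ne hkk]
          have hlt : j'.1 < k.1 := by
            have : j'.1 ≠ k.1 := fun h => hkk (Fin.ext h)
            omega
          rw [hvv₄' j' (le_of_lt hlt), hsv₄' j' hlt]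
      rw [hsk] at hpc₄'
      simp only at hpc₄'
      rw [if_pos htest] at hpc₄'
      exact never_write_le e hfair H ⟨0, Net.deg_pos A⟩ (u₄+1) (by omega) (by simp) hpc₄'
    · -- go on to neighbour `k''`
      refine ⟨k'', rfl, u₄+1, by omega, ?_, ?_⟩
      · rw [hpc₄'] ; rw [hsk]
      · intro k' hk'
        have hk'' := finSucc?_some hsk
        have hk'le : k'.1 ≤ k.1 := by omega
        refine ⟨?_, hsv₅ k' hk'le⟩
        rw [congrFun (congrFun hvv₄ A) k']
        exact hvv₄' k' hk'le
  -- iterate `pass_step` : impossible since `Fin (Net.deg A)` is bounded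
  have hstart : P ⟨0, Net.deg_pos A⟩ := by
    obtain ⟨u₀, hu₀, hs₀, hpc₀⟩ := reach_pc e hfair A ⟨0, Net.deg_pos A⟩ T
    exact ⟨u₀, hu₀, hpc₀, fun k' hk' => by simp at hk'⟩
  have hiter : ∀ d (k : Fin (Net.deg A)), Net.deg A - k.1 ≤ d + 1 → P k → False := by
    intro d
    induction d with
    | zero =>
        intro k hd hPk
        obtain ⟨k'', hsk, -⟩ := pass_step k hPk
        have h1 := finSucc?_some hsk
        have h2 := k''.isLt
        have h3 := k.isLt
        omega
    | succ d ih =>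
        intro k hd hPk
        obtain ⟨k'', hsk, hPk'⟩ := pass_step k hPk
        have h1 := finSucc?_some hsk
        exact ih k'' (by omega) hPk'
  exact hiter (Net.deg A) ⟨0, Net.deg_pos A⟩ (by simp) hstart

end Final

end RC

open RC in
/-- Let `A` be a process executing the Read Checking protocol.
Whatever the (fair) execution, `A` writes an infinite number of times into each of
its registers `Write_{AB_i}`, for every neighbour `B_i` of `A`. -/
theorem read_checking_writes_infinitely_often (Net : Network) (Val : Type)
    (e : Exec Net Val) (hfair : e.Fair) (A : Net.Proc) (i : Fin (Net.deg A)) (t : ℕ) :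
    ∃ u, t ≤ u ∧ WritesW e A (Net.nbr A i) u := by
  by_contra H
  push_neg at H
  obtain ⟨T, hTt, hloop⟩ := in_loop_forever e hfair H
  have hW := regW_const e hloop
  choose Tk hTk1 hTk2 using allows_forever e hfair hW
  set T' := max T (Finset.univ.sup Tk) with hT'
  have hTT' : T ≤ T' := le_max_left _ _
  refine final_pass e hfair H (le_trans hTt hTT') (W := (e.cfg T).regW A) ?_ ?_
  · intro u hu q
    exact congrFun (hW u (le_trans hTT' hu)) q
  · intro u hu k
    exact hTk2 k u
      (le_trans (le_trans (Finset.le_sup (Finset.mem_univ k)) (le_max_right _ _)) hu)
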